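/- The truncated mean E[X | a ≤ X ≤ b] of a p-variate truncated unified skew-t distribution (equivalently, of the associated (q+p)-variate truncated Student's t) exists whenever ν + p₁ > 1, where p₁ is the number of coordinates in which both truncation limits a, b are finite; in particular it exists whenever at least one coordinate has both limits finite. The second moment E[XXᵀ | a ≤ X ≤ b] exists whenever ν + p₁ > 2; in particular whenever at least two coordinates have both limits finite. -/

import Mathlib

open MeasureTheory

/-- The `n`-variate Student's `t` density with location `ξ`, scale matrix `S` and `ν` degrees of
freedom. -/
noncomputable def mvtDensity {n : ℕ} (ξ : Fin n → ℝ) (S : Matrix (Fin n) (Fin n) ℝ)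
    (ν : ℝ) (x : Fin n → ℝ) : ℝ :=
  Real.Gamma ((ν + (n : ℝ)) / 2) /
      (Real.Gamma (ν / 2) * (ν * Real.pi) ^ ((n : ℝ) / 2) * Real.sqrt S.det) *
    (1 + dotProduct (x - ξ) (S⁻¹.mulVec (x - ξ)) / ν) ^ (-(ν + (n : ℝ)) / 2)

/-- Quadratic form of a positive definite matrix is bounded below by a positive multiple of the
squared norm. -/
lemma quad_lower_bound {n : ℕ} {M : Matrix (Fin n) (Fin n) ℝ} (hM : M.PosDef) :
    ∃ c > 0, ∀ x : Fin n → ℝ, c * ‖x‖ ^ 2 ≤ dotProduct x (M.mulVec x) := by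
  have hcont : Continuous fun x : Fin n → ℝ => dotProduct x (M.mulVec x) := by
    simp only [dotProduct, Matrix.mulVec]
    exact continuous_finset_sum _ fun i _ =>
      (continuous_apply i).mul (continuous_finset_sum _ fun j _ =>
        continuous_const.mul (continuous_apply j))
  have key : ∀ x : Fin n → ℝ, x ≠ 0 →
      dotProduct x (M.mulVec x) =
        ‖x‖ ^ 2 * dotProduct (‖x‖⁻¹ • x) (M.mulVec (‖x‖⁻¹ • x)) := by
    intro x hx
    have hnx : ‖x‖ ≠ 0 := norm_ne_zero_iff.2 hx
    rw [Matrix.mulVec_smul, smul_dotProduct, dotProduct_smul]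
    field_simp
    simp only [smul_eq_mul]
    field_simp
  by_cases hn : (Metric.sphere (0 : Fin n → ℝ) 1).Nonempty
  · obtain ⟨x₀, hx₀, hmin⟩ := (isCompact_sphere (0 : Fin n → ℝ) 1).exists_isMinOn hn
      hcont.continuousOn
    have hx₀ne : x₀ ≠ 0 := by
      intro h
      rw [h] at hx₀
      simp at hx₀
    have hcpos : 0 < dotProduct x₀ (M.mulVec x₀) := by
      have := hM.dotProduct_mulVec_pos hx₀ne
      simpa using this
    refine ⟨_, hcpos, fun x => ?_⟩
    rcases eq_or_ne x 0 with rfl | hx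
    · simp
    · have hnx : ‖x‖ ≠ 0 := norm_ne_zero_iff.2 hx
      have hu : (‖x‖⁻¹ • x) ∈ Metric.sphere (0 : Fin n → ℝ) 1 := by
        simp [norm_smul, abs_of_nonneg (inv_nonneg.2 (norm_nonneg x)),
          inv_mul_cancel₀ hnx]
      have h1 : dotProduct x₀ (M.mulVec x₀)
          ≤ dotProduct (‖x‖⁻¹ • x) (M.mulVec (‖x‖⁻¹ • x)) := hmin hu
      rw [key x hx]
      have hsq : (0:ℝ) ≤ ‖x‖ ^ 2 := sq_nonneg _
      nlinarith
  · refine ⟨1, one_pos, fun x => ?_⟩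
    rcases eq_or_ne x 0 with rfl | hx
    · simp
    · exfalso
      apply hn
      have hnx : ‖x‖ ≠ 0 := norm_ne_zero_iff.2 hx
      exact ⟨‖x‖⁻¹ • x, by
        simp [norm_smul, abs_of_nonneg (inv_nonneg.2 (norm_nonneg x)), inv_mul_cancel₀ hnx]⟩

lemma quad_nonneg {n : ℕ} {M : Matrix (Fin n) (Fin n) ℝ} (hM : M.PosDef) (y : Fin n → ℝ) :
    0 ≤ dotProduct y (M.mulVec y) := by
  obtain ⟨c, hc, hq⟩ := quad_lower_bound hM
  exact le_trans (by positivity) (hq y)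

lemma continuous_mvtDensity {n : ℕ} (ξ : Fin n → ℝ) {S : Matrix (Fin n) (Fin n) ℝ}
    (hS : S.PosDef) {ν : ℝ} (hν : 0 < ν) : Continuous (mvtDensity ξ S ν) := by
  unfold mvtDensity
  apply Continuous.mul continuous_const
  apply Continuous.rpow_const
  · apply Continuous.add continuous_const
    apply Continuous.div_const
    simp only [dotProduct, Matrix.mulVec, Pi.sub_apply]
    exact continuous_finset_sum _ fun i _ =>
      (((continuous_apply i).sub continuous_const).mul (continuous_finset_sum _ fun j _ =>
        continuous_const.mul ((continuous_apply j).sub continuous_const)))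
  · intro x
    left
    have h0 : 0 ≤ dotProduct (x - ξ) (S⁻¹.mulVec (x - ξ)) := quad_nonneg hS.inv _
    positivity

lemma mvtDensity_nonneg {n : ℕ} (ξ : Fin n → ℝ) {S : Matrix (Fin n) (Fin n) ℝ}
    (hS : S.PosDef) {ν : ℝ} (hν : 0 < ν) (x : Fin n → ℝ) : 0 ≤ mvtDensity ξ S ν x := by
  have h0 : 0 ≤ dotProduct (x - ξ) (S⁻¹.mulVec (x - ξ)) := quad_nonneg hS.inv _
  unfold mvtDensity
  apply mul_nonneg
  · apply div_nonneg (Real.Gamma_nonneg_of_nonneg (by positivity))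
    have := Real.Gamma_nonneg_of_nonneg (le_of_lt (half_pos hν))
    positivity
  · apply Real.rpow_nonneg
    positivity

set_option maxHeartbeats 1000000 in
lemma key_integrable {n : ℕ} (ξ : Fin n → ℝ) {S : Matrix (Fin n) (Fin n) ℝ} (hS : S.PosDef)
    {ν : ℝ} (hν : 0 < ν) (α β : Fin n → EReal) (hαβ : ∀ i, α i < β i) (k : ℕ)
    (hk : (k : ℝ) < ν + (Nat.card {i : Fin n // α i ≠ ⊥ ∧ β i ≠ ⊤} : ℝ)) :
    IntegrableOn (fun x => ‖x‖ ^ k * mvtDensity ξ S ν x)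
      {x : Fin n → ℝ | ∀ l, α l ≤ (x l : EReal) ∧ (x l : EReal) ≤ β l} := by
  classical
  set P : Fin n → Prop := fun l => α l ≠ ⊥ ∧ β l ≠ ⊤ with hP
  set Sset : Set (Fin n → ℝ) :=
    {x : Fin n → ℝ | ∀ l, α l ≤ (x l : EReal) ∧ (x l : EReal) ≤ β l} with hSset
  -- cardinalities
  set m : ℕ := Fintype.card {i : Fin n // ¬ P i} with hm
  have hcard : Fintype.card {i : Fin n // P i} + m = n := by
    rw [hm, Fintype.card_subtype_compl]
    have := Fintype.card_subtype_le P
    simp only [Fintype.card_fin] at this ⊢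
    omega
  have hNat : (Nat.card {i : Fin n // α i ≠ ⊥ ∧ β i ≠ ⊤} : ℝ)
      = Fintype.card {i : Fin n // P i} := by
    rw [Nat.card_eq_fintype_card]
  set ρ : ℝ := ν + n - k with hρ
  have hmρ : (m : ℝ) < ρ := by
    have : (Fintype.card {i : Fin n // P i} : ℝ) + m = n := by exact_mod_cast hcard
    rw [hNat] at hk
    simp only [hρ]
    linarith
  have hρpos : 0 < ρ := lt_of_le_of_lt (Nat.cast_nonneg m) hmρ
  set r : ℝ := if m = 0 then 2 else ρ / m with hr
  have hr1 : 1 < r := by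
    rw [hr]
    split_ifs with h
    · norm_num
    · rw [lt_div_iff₀ (by exact_mod_cast Nat.pos_of_ne_zero h)]
      simpa using hmρ
  have hr0 : 0 ≤ r := by linarith
  have hrm : r * m ≤ ρ := by
    rw [hr]
    split_ifs with h
    · simp [h]
      linarith
    · rw [div_mul_cancel₀]
      exact_mod_cast Nat.cast_ne_zero.2 h
  -- the dominating product function
  set a : Fin n → ℝ := fun l => (α l).toReal with ha
  set b : Fin n → ℝ := fun l => (β l).toReal with hb
  set G : Fin n → ℝ → ℝ := fun l t =>
    if P l then (Set.Icc (a l) (b l)).indicator (fun _ => (1:ℝ)) t else (1 + ‖t‖) ^ (-r)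
    with hG
  have hGint : ∀ l, Integrable (G l) := by
    intro l
    by_cases h : P l
    · have hGl : G l = (Set.Icc (a l) (b l)).indicator (fun _ => (1:ℝ)) := by
        simp only [hG, if_pos h]
      rw [hGl, integrable_indicator_iff measurableSet_Icc]
      exact integrableOn_const measure_Icc_lt_top.ne (by simp)
    · have hGl : G l = fun t => (1 + ‖t‖) ^ (-r) := by
        simp only [hG, if_neg h]
      rw [hGl]
      apply integrable_one_add_norm (μ := (volume : Measure ℝ))
      simpa using hr1
  have hGprod : Integrable (fun x : Fin n → ℝ => ∏ l, G l (x l)) :=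
    Integrable.fintype_prod (f := G) hGint
  -- constants
  obtain ⟨c, hc, hq⟩ := quad_lower_bound hS.inv
  set c₁ : ℝ := min 1 (c / ν) / (2 * (1 + ‖ξ‖) ^ 2) with hc₁def
  have hminpos : 0 < min 1 (c / ν) := lt_min one_pos (div_pos hc hν)
  have hc₁ : 0 < c₁ := by
    apply div_pos hminpos
    positivity
  set e : ℝ := -(ν + (n:ℝ)) / 2 with he
  have he0 : e ≤ 0 := by
    rw [he]
    have : (0:ℝ) ≤ ν + n := by positivity
    linarith
  set A : ℝ := Real.Gamma ((ν + (n : ℝ)) / 2) /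
      (Real.Gamma (ν / 2) * (ν * Real.pi) ^ ((n : ℝ) / 2) * Real.sqrt S.det) with hA
  set C : ℝ := |A| * c₁ ^ e with hC
  have hSm : MeasurableSet Sset := by
    have : Sset = ⋂ l, (fun x : Fin n → ℝ => ((x l : ℝ) : EReal)) ⁻¹'
        (Set.Icc (α l) (β l)) := by
      ext x
      simp [hSset, Set.mem_iInter, Set.mem_Icc, forall_and]
    rw [this]
    exact MeasurableSet.iInter fun l =>
      (measurable_coe_real_ereal.comp (measurable_pi_apply l)) measurableSet_Icc
  -- pointwise bound on Sset
  have hbound : ∀ x ∈ Sset, ‖‖x‖ ^ k * mvtDensity ξ S ν x‖ ≤ C * ∏ l, G l (x l) := by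
    intro x hx
    have hbpos : (0:ℝ) < 1 + ‖x‖ := by positivity
    set Q : ℝ := dotProduct (x - ξ) (S⁻¹.mulVec (x - ξ)) with hQdef
    have hQ0 : 0 ≤ Q := quad_nonneg hS.inv _
    have hQν : c * ‖x - ξ‖ ^ 2 / ν ≤ Q / ν := by
      gcongr
      exact hq _
    have hxx : ‖x‖ ≤ ‖x - ξ‖ + ‖ξ‖ := by
      have := norm_add_le (x - ξ) ξ
      simpa using this
    -- step 1 : c₁ (1+‖x‖)² ≤ 1 + Q/ν
    have h2 : (1 + ‖x‖) ^ 2 ≤ 2 * (1 + ‖ξ‖) ^ 2 * (1 + ‖x - ξ‖ ^ 2) := by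
      nlinarith [norm_nonneg (x - ξ), norm_nonneg ξ, norm_nonneg x,
        sq_nonneg (1 + ‖ξ‖ - ‖x - ξ‖),
        mul_nonneg (mul_nonneg (norm_nonneg ξ) (norm_nonneg ξ)) (sq_nonneg ‖x - ξ‖),
        mul_nonneg (norm_nonneg ξ) (sq_nonneg ‖x - ξ‖)]
    have h3 : min 1 (c / ν) * (1 + ‖x - ξ‖ ^ 2) ≤ 1 + Q / ν := by
      have h31 : min 1 (c / ν) * ‖x - ξ‖ ^ 2 ≤ c / ν * ‖x - ξ‖ ^ 2 :=
        mul_le_mul_of_nonneg_right (min_le_right _ _) (sq_nonneg _)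
      have h32 : c / ν * ‖x - ξ‖ ^ 2 ≤ Q / ν := by
        rw [div_mul_eq_mul_div]
        exact hQν
      have h33 : min 1 (c / ν) ≤ 1 := min_le_left _ _
      have h34 := h31.trans h32
      rw [mul_add, mul_one]
      linarith
    have h1 : c₁ * (1 + ‖x‖) ^ 2 ≤ 1 + Q / ν := by
      rw [hc₁def, div_mul_eq_mul_div, div_le_iff₀ (by positivity)]
      calc min 1 (c / ν) * (1 + ‖x‖) ^ 2
          ≤ min 1 (c / ν) * (2 * (1 + ‖ξ‖) ^ 2 * (1 + ‖x - ξ‖ ^ 2)) :=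
            mul_le_mul_of_nonneg_left h2 hminpos.le
        _ = min 1 (c / ν) * (1 + ‖x - ξ‖ ^ 2) * (2 * (1 + ‖ξ‖) ^ 2) := by ring
        _ ≤ (1 + Q / ν) * (2 * (1 + ‖ξ‖) ^ 2) :=
            mul_le_mul_of_nonneg_right h3 (by positivity)
    -- step 2 : rpow bound
    have h4 : (1 + Q / ν) ^ e ≤ c₁ ^ e * (1 + ‖x‖) ^ (2 * e) := by
      have hpos : (0:ℝ) < c₁ * (1 + ‖x‖) ^ 2 := by positivity
      have := Real.rpow_le_rpow_of_nonpos hpos h1 he0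
      calc (1 + Q / ν) ^ e ≤ (c₁ * (1 + ‖x‖) ^ 2) ^ e := this
        _ = c₁ ^ e * ((1 + ‖x‖) ^ 2) ^ e := Real.mul_rpow hc₁.le (by positivity)
        _ = c₁ ^ e * (1 + ‖x‖) ^ (2 * e) := by
            rw [← Real.rpow_natCast (1 + ‖x‖) 2, ← Real.rpow_mul hbpos.le]
            norm_num
    -- step 3 : product bound
    have hfree : ∀ l, ¬ P l → G l (x l) = (1 + ‖x l‖) ^ (-r) := by
      intro l hl
      simp only [hG, if_neg hl]
    have hbdd : ∀ l, P l → G l (x l) = 1 := by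
      intro l hl
      have hxl := hx l
      have hαne : α l ≠ ⊤ := ne_top_of_lt (lt_of_le_of_lt hxl.1 (EReal.coe_lt_top _))
      have hβne : β l ≠ ⊥ := ne_bot_of_gt (lt_of_lt_of_le (EReal.bot_lt_coe _) hxl.2)
      have hal : ((a l : ℝ) : EReal) = α l := EReal.coe_toReal hαne hl.1
      have hbl : ((b l : ℝ) : EReal) = β l := EReal.coe_toReal hl.2 hβne
      have h1' : a l ≤ x l := by
        rw [← EReal.coe_le_coe_iff, hal]
        exact hxl.1
      have h2' : x l ≤ b l := by
        rw [← EReal.coe_le_coe_iff, hbl]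
        exact hxl.2
      have hmem : x l ∈ Set.Icc (a l) (b l) := Set.mem_Icc.mpr ⟨h1', h2'⟩
      simp only [hG, if_pos hl, Set.indicator_of_mem hmem]
    set F : Finset (Fin n) := Finset.univ.filter (fun l => ¬ P l) with hF
    have hFcard : F.card = m := by
      rw [hm, Fintype.card_subtype]
    have hprodeq : ∏ l, G l (x l) = ∏ l ∈ F, (1 + ‖x l‖) ^ (-r) := by
      rw [← Finset.prod_filter_mul_prod_filter_not Finset.univ (fun l => ¬ P l)]
      have h1'' : ∏ l ∈ Finset.univ.filter (fun l => ¬¬ P l), G l (x l) = 1 := by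
        apply Finset.prod_eq_one
        intro l hl
        rw [Finset.mem_filter] at hl
        exact hbdd l (not_not.mp hl.2)
      rw [h1'', mul_one]
      exact Finset.prod_congr rfl fun l hl => hfree l (Finset.mem_filter.mp hl).2
    have hple : ∏ l ∈ F, (1 + ‖x l‖) ^ r ≤ (1 + ‖x‖) ^ ρ := by
      calc ∏ l ∈ F, (1 + ‖x l‖) ^ r ≤ ∏ l ∈ F, (1 + ‖x‖) ^ r := by
            apply Finset.prod_le_prod
            · intro l _
              apply Real.rpow_nonneg
              positivity
            · intro l _
              apply Real.rpow_le_rpow (by positivity) _ hr0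
              have : ‖x l‖ ≤ ‖x‖ := norm_le_pi_norm x l
              linarith
        _ = ((1 + ‖x‖) ^ r) ^ (F.card : ℕ) := by rw [Finset.prod_const]
        _ = (1 + ‖x‖) ^ (r * F.card) := by
            rw [Real.rpow_mul hbpos.le, Real.rpow_natCast]
        _ ≤ (1 + ‖x‖) ^ ρ := by
            apply Real.rpow_le_rpow_of_exponent_le (by linarith [norm_nonneg x])
            rw [hFcard]
            exact hrm
    have hprodpos : 0 < ∏ l ∈ F, (1 + ‖x l‖) ^ r := by
      apply Finset.prod_pos
      intro l _
      apply Real.rpow_pos_of_pos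
      positivity
    have hinv : (1 + ‖x‖) ^ (-ρ) ≤ ∏ l ∈ F, (1 + ‖x l‖) ^ (-r) := by
      have hstep : ((1 + ‖x‖) ^ ρ)⁻¹ ≤ (∏ l ∈ F, (1 + ‖x l‖) ^ r)⁻¹ :=
        inv_anti₀ hprodpos hple
      calc (1 + ‖x‖) ^ (-ρ) = ((1 + ‖x‖) ^ ρ)⁻¹ := by
            rw [Real.rpow_neg hbpos.le]
        _ ≤ (∏ l ∈ F, (1 + ‖x l‖) ^ r)⁻¹ := hstep
        _ = ∏ l ∈ F, ((1 + ‖x l‖) ^ r)⁻¹ := by rw [Finset.prod_inv_distrib]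
        _ = ∏ l ∈ F, (1 + ‖x l‖) ^ (-r) := by
            apply Finset.prod_congr rfl
            intro l _
            rw [Real.rpow_neg (by positivity)]
    -- assemble
    have hDval : mvtDensity ξ S ν x = A * (1 + Q / ν) ^ e := rfl
    have hrpow_nonneg : (0:ℝ) ≤ (1 + Q / ν) ^ e := Real.rpow_nonneg (by positivity) _
    have hnorm : ‖‖x‖ ^ k * mvtDensity ξ S ν x‖ = ‖x‖ ^ k * |A| * (1 + Q / ν) ^ e := by
      rw [hDval, Real.norm_eq_abs, abs_mul, abs_mul, abs_of_nonneg hrpow_nonneg,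
        abs_of_nonneg (pow_nonneg (norm_nonneg x) k)]
      ring
    have hxk : ‖x‖ ^ k ≤ (1 + ‖x‖) ^ (k : ℝ) := by
      rw [Real.rpow_natCast]
      exact pow_le_pow_left₀ (norm_nonneg x) (by linarith) k
    have hexp : (k : ℝ) + 2 * e = -ρ := by
      rw [he, hρ]
      ring
    calc ‖‖x‖ ^ k * mvtDensity ξ S ν x‖ = ‖x‖ ^ k * |A| * (1 + Q / ν) ^ e := hnorm
      _ ≤ (1 + ‖x‖) ^ (k:ℝ) * |A| * (c₁ ^ e * (1 + ‖x‖) ^ (2 * e)) := by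
          apply mul_le_mul
          · exact mul_le_mul_of_nonneg_right hxk (abs_nonneg A)
          · exact h4
          · exact hrpow_nonneg
          · positivity
      _ = |A| * c₁ ^ e * ((1 + ‖x‖) ^ (k:ℝ) * (1 + ‖x‖) ^ (2 * e)) := by ring
      _ = |A| * c₁ ^ e * (1 + ‖x‖) ^ (-ρ) := by
          rw [← Real.rpow_add hbpos, hexp]
      _ ≤ |A| * c₁ ^ e * ∏ l ∈ F, (1 + ‖x l‖) ^ (-r) := by
          apply mul_le_mul_of_nonneg_left hinv
          positivity
      _ = C * ∏ l, G l (x l) := by rw [hC, hprodeq]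
  -- conclude
  have hgint : Integrable (fun x : Fin n → ℝ => C * ∏ l, G l (x l)) := hGprod.const_mul C
  apply Integrable.mono' (hgint.restrict (s := Sset))
  · exact (Continuous.mul (continuous_norm.pow k)
      (continuous_mvtDensity ξ hS hν)).aestronglyMeasurable
  · rw [ae_restrict_iff' hSm]
    exact Filter.Eventually.of_forall hbound

/-- For the truncated unified skew-`t` distribution — equivalently (via
Theorem 1) for the associated `(q+p)`-variate truncated Student's `t` with the same `ν` — the
truncated mean exists whenever `ν + p₁ > 1` and the truncated second moment exists whenever
`ν + p₁ > 2`, where `p₁` is the number of coordinates in which both truncation limits are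
finite. In particular the mean exists when at least one coordinate has both limits finite
(`p₁ ≥ 1`), and the second moment when at least two do (`p₁ ≥ 2`), since `ν > 0`. -/
theorem stmt_11 {n : ℕ} (ξ : Fin n → ℝ) (S : Matrix (Fin n) (Fin n) ℝ) (hS : S.PosDef)
    (ν : ℝ) (hν : 0 < ν) (α β : Fin n → EReal) (hαβ : ∀ i, α i < β i) :
    (1 < ν + (Nat.card {i : Fin n // α i ≠ ⊥ ∧ β i ≠ ⊤} : ℝ) →
      ∀ i, IntegrableOn (fun x => x i * mvtDensity ξ S ν x)
        {x : Fin n → ℝ | ∀ l, α l ≤ (x l : EReal) ∧ (x l : EReal) ≤ β l}) ∧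
    (2 < ν + (Nat.card {i : Fin n // α i ≠ ⊥ ∧ β i ≠ ⊤} : ℝ) →
      ∀ i j, IntegrableOn (fun x => x i * x j * mvtDensity ξ S ν x)
        {x : Fin n → ℝ | ∀ l, α l ≤ (x l : EReal) ∧ (x l : EReal) ≤ β l}) := by
  constructor
  · intro h i
    have hkey := key_integrable ξ hS hν α β hαβ 1 (by push_cast; linarith)
    apply Integrable.mono' hkey
    · exact ((continuous_apply i).mul (continuous_mvtDensity ξ hS hν)).aestronglyMeasurable
    · apply Filter.Eventually.of_forall
      intro x
      have hD := mvtDensity_nonneg ξ hS hν x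
      have hxi : |x i| ≤ ‖x‖ := norm_le_pi_norm x i
      rw [Real.norm_eq_abs, abs_mul, abs_of_nonneg hD, pow_one]
      exact mul_le_mul_of_nonneg_right hxi hD
  · intro h i j
    have hkey := key_integrable ξ hS hν α β hαβ 2 (by push_cast; linarith)
    apply Integrable.mono' hkey
    · exact (((continuous_apply i).mul (continuous_apply j)).mul
        (continuous_mvtDensity ξ hS hν)).aestronglyMeasurable
    · apply Filter.Eventually.of_forall
      intro x
      have hD := mvtDensity_nonneg ξ hS hν x
      have hxi : |x i| ≤ ‖x‖ := norm_le_pi_norm x i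
      have hxj : |x j| ≤ ‖x‖ := norm_le_pi_norm x j
      rw [Real.norm_eq_abs, abs_mul, abs_mul, abs_of_nonneg hD]
      calc |x i| * |x j| * mvtDensity ξ S ν x ≤ ‖x‖ * ‖x‖ * mvtDensity ξ S ν x := by
            apply mul_le_mul_of_nonneg_right _ hD
            exact mul_le_mul hxi hxj (abs_nonneg _) (norm_nonneg _)
        _ = ‖x‖ ^ 2 * mvtDensity ξ S ν x := by ring
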